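/- arXiv:0807.2351 — 2 statements merged into one kernel-verified Lean document; each statement's English description precedes it below -/
import Mathlib

section
/- Let (A, d, ·) be a dga and a ∈ A^{odd} with da + a·a = 0. Then the element P(a) := Σ_{n≥0} 1 ⊗ a^{⊗n} in the normalized Hochschild chain complex C̄_•(A,A) = ∏_{n≥0} A ⊗ Ā^{⊗n} is a cycle: δ(P(a)) = 0. -/
open scoped TensorProduct

noncomputable section

/-- `Ā = A / k·1`. -/
abbrev HAbar (k A : Type) [Field k] [Ring A] [Algebra k A] : Type :=
  A ⧸ (Submodule.span k {(1 : A)})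

/-- The degree-`n` part `A ⊗ Ā^{⊗n}` of the normalized Hochschild chain complex. -/
abbrev HChains (k A : Type) [Field k] [Ring A] [Algebra k A] (n : ℕ) : Type :=
  A ⊗[k] (PiTensorProduct k (fun _ : Fin n => HAbar k A))

/-- The pure tensor `a₀ ⊗ ā₁ ⊗ ⋯ ⊗ āₙ`. -/
def hpt (k : Type) {A : Type} [Field k] [Ring A] [Algebra k A] {n : ℕ}
    (a : Fin (n + 1) → A) : HChains k A n :=
  a 0 ⊗ₜ[k] (PiTensorProduct.tprod k
    (fun i => (Submodule.Quotient.mk (a i.succ) : HAbar k A)))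

/-!
Grade `1` in degree `0` and each `a` in the odd degree `D`. The shifted degree `D + 1` is even,
so every Koszul sign of `δ` on `1 ⊗ a ⊗ ⋯ ⊗ a` is `+1`. Since `d 1 = 0`, the internal part
gives `Σᵢ 1 ⊗ ⋯ ⊗ da ⊗ ⋯`. The product `1 · a` in the first slot gives `a ⊗ a ⊗ ⋯ ⊗ a`, which
cancels against the cyclic term `a · 1 ⊗ a ⊗ ⋯ ⊗ a`, and the other adjacent products give
`Σᵢ 1 ⊗ ⋯ ⊗ a·a ⊗ ⋯`. By multilinearity the two sums combine into
`Σᵢ 1 ⊗ ⋯ ⊗ (da + a·a) ⊗ ⋯ = 0`.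
-/

section hpt

variable {k A : Type} [Field k] [Ring A] [Algebra k A] {n : ℕ}

theorem hpt_eq_zero_of_head_eq_zero (a : Fin (n + 1) → A) (h : a 0 = 0) : hpt k a = 0 := by
  rw [hpt, h, TensorProduct.zero_tmul]

theorem hpt_update_succ (a : Fin (n + 1) → A) (i : Fin n) (x : A) :
    hpt k (Function.update a i.succ x) =
      a 0 ⊗ₜ[k] PiTensorProduct.tprod k (Function.update
        (fun t => (Submodule.Quotient.mk (a t.succ) : HAbar k A)) i (Submodule.Quotient.mk x)) := by
  rw [hpt, Function.update_of_ne (Fin.succ_ne_zero i).symm]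
  congr 2
  ext t
  rcases eq_or_ne t i with rfl | ht
  · simp
  · simp [ht]

theorem hpt_update_succ_add (a : Fin (n + 1) → A) (i : Fin n) (x y : A) :
    hpt k (Function.update a i.succ (x + y)) =
      hpt k (Function.update a i.succ x) + hpt k (Function.update a i.succ y) := by
  simp only [hpt_update_succ, Submodule.Quotient.mk_add, MultilinearMap.map_update_add,
    TensorProduct.tmul_add]

theorem hpt_update_succ_zero (a : Fin (n + 1) → A) (i : Fin n) :
    hpt k (Function.update a i.succ 0) = 0 := by
  simp only [hpt_update_succ, Submodule.Quotient.mk_zero, MultilinearMap.map_update_zero,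
    TensorProduct.tmul_zero]

end hpt

section faces

variable {α : Type*} {m : ℕ}

theorem Fin.cons_const_apply {n : ℕ} (x y : α) (j : Fin (n + 1)) :
    (Fin.cons x (fun _ => y) : Fin (n + 1) → α) j = if (j : ℕ) = 0 then x else y := by
  cases j using Fin.cases <;> simp

variable [Mul α]

theorem mul_adjacent_cons_const_eq_update (x a : α) (i : Fin (m + 1)) :
    (fun j : Fin (m + 1) =>
      if (j : ℕ) < (i : ℕ) then (Fin.cons x (fun _ => a) : Fin (m + 2) → α) j.castSucc
      else if (j : ℕ) = (i : ℕ) then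
        (Fin.cons x (fun _ => a) : Fin (m + 2) → α) j.castSucc *
          (Fin.cons x (fun _ => a) : Fin (m + 2) → α) j.succ
      else (Fin.cons x (fun _ => a) : Fin (m + 2) → α) j.succ) =
    Function.update (Fin.cons x fun _ => a) i
      ((Fin.cons x (fun _ => a) : Fin (m + 1) → α) i * a) := by
  ext j
  simp only [Fin.cons_const_apply, Fin.val_castSucc, Fin.val_succ, Function.update_apply,
    Fin.ext_iff]
  split_ifs <;> first | rfl | contradiction | omega

theorem mul_last_head_cons_const_eq_update (x a : α) :
    (fun j : Fin (m + 1) =>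
      if (j : ℕ) = 0 then
        (Fin.cons x (fun _ => a) : Fin (m + 2) → α) (Fin.last (m + 1)) *
          (Fin.cons x (fun _ => a) : Fin (m + 2) → α) 0
      else (Fin.cons x (fun _ => a) : Fin (m + 2) → α) j.castSucc) =
    Function.update (Fin.cons x fun _ => a) 0 (a * x) := by
  ext j
  simp only [Fin.cons_const_apply, Fin.val_castSucc, Fin.val_last, Fin.val_zero,
    Function.update_apply, Fin.ext_iff]
  split_ifs <;> first | rfl | contradiction

end faces

theorem sum_lt_succ_cons_zero_const (D : ℤ) {n t : ℕ} (ht : t ≤ n) :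
    (∑ j : Fin (n + 1), if (j : ℕ) < t + 1 then (Fin.cons 0 (fun _ => D) : Fin (n + 1) → ℤ) j
      else 0) = t * D := by
  rw [Fin.sum_univ_succ]
  simp only [Fin.cons_zero, Fin.cons_succ, Fin.val_succ, ite_self, zero_add, add_lt_add_iff_right,
    Finset.sum_ite, Finset.sum_const_zero, add_zero, Finset.sum_const, Fin.card_filter_val_lt,
    min_eq_right ht, nsmul_eq_mul]

theorem neg_one_zpow_koszul_cons_zero_const (k : Type) [DivisionRing k] {D : ℤ} (hD : Odd D)
    {N n : ℕ} (hN : N ≤ n + 1) (i : Fin N) :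
    (-1 : k) ^ (if (i : ℕ) = 0 then (Fin.cons 0 (fun _ => D) : Fin (n + 1) → ℤ) 0 else
        (∑ j : Fin (n + 1), if (j : ℕ) < (i : ℕ) then
          (Fin.cons 0 (fun _ => D) : Fin (n + 1) → ℤ) j else 0) + ((i : ℕ) : ℤ) - 1) = 1 := by
  obtain ⟨i, hi⟩ := i
  rcases i with _ | t
  · simp
  · rw [if_neg t.succ_ne_zero, sum_lt_succ_cons_zero_const D (by omega),
      show (t * D + ((t + 1 : ℕ) : ℤ) - 1 : ℤ) = t * (D + 1) by push_cast; ring]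
    exact (hD.add_one.mul_left _).neg_one_zpow

theorem P_of_MC_element_is_hochschild_cycle_general
    (k A : Type) [Field k] [Ring A] [Algebra k A]
    (𝒜 : ℤ → Submodule k A)
    (hone : (1 : A) ∈ 𝒜 0)
    (d : A →ₗ[k] A) (hd1 : d 1 = 0)
    (δd : ∀ m : ℕ, HChains k A m →ₗ[k] HChains k A m)
    (δm : ∀ m : ℕ, HChains k A (m + 1) →ₗ[k] HChains k A m)
    -- internal-differential part of the Hochschild boundary on pure tensors
    (hδd : ∀ (m : ℕ) (deg : Fin (m + 1) → ℤ) (a : Fin (m + 1) → A),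
      (∀ i, a i ∈ 𝒜 (deg i)) →
      δd m (hpt k a) =
        ∑ i : Fin (m + 1),
          ((-1 : k) ^ (if (i : ℕ) = 0 then deg 0 else
              (∑ j : Fin (m + 1), if (j : ℕ) < (i : ℕ) then deg j else 0)
                + ((i : ℕ) : ℤ) - 1)) •
            hpt k (Function.update a i (d (a i))))
    -- multiplication part (adjacent products and cyclic term) on pure tensors
    (hδm : ∀ (m : ℕ) (deg : Fin (m + 2) → ℤ) (a : Fin (m + 2) → A),
      (∀ i, a i ∈ 𝒜 (deg i)) →
      δm m (hpt k a) =
        (∑ i : Fin (m + 1),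
          ((-1 : k) ^ (if (i : ℕ) = 0 then deg 0 else
              (∑ j : Fin (m + 2), if (j : ℕ) < (i : ℕ) then deg j else 0)
                + ((i : ℕ) : ℤ) - 1)) •
            hpt k (fun j : Fin (m + 1) =>
              if (j : ℕ) < (i : ℕ) then a (Fin.castSucc j)
              else if (j : ℕ) = (i : ℕ) then a (Fin.castSucc j) * a j.succ
              else a j.succ))
        - ((-1 : k) ^ ((deg (Fin.last (m + 1)) + 1) *
              ((∑ j : Fin (m + 2), if (j : ℕ) < m + 1 then deg j else 0) + (m : ℤ)))) •
            hpt k (fun j : Fin (m + 1) =>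
              if (j : ℕ) = 0 then a (Fin.last (m + 1)) * a 0
              else a (Fin.castSucc j)))
    (a : A) (D : ℤ) (ha : a ∈ 𝒜 D) (hD : Odd D)   -- a ∈ A^{odd}
    (hMC : d a + a * a = 0) :                       -- Maurer-Cartan equation
    ∀ m : ℕ,
      δd m (hpt k (Fin.cons (1 : A) (fun _ : Fin m => a)))
        + δm m (hpt k (Fin.cons (1 : A) (fun _ : Fin (m + 1) => a))) = 0 := by
  intro m
  rw [hδd m (Fin.cons 0 fun _ => D) _ (Fin.cases hone fun _ => ha),
    hδm m (Fin.cons 0 fun _ => D) _ (Fin.cases hone fun _ => ha)]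
  simp only [mul_adjacent_cons_const_eq_update, mul_last_head_cons_const_eq_update]
  simp only [neg_one_zpow_koszul_cons_zero_const k hD le_rfl,
    neg_one_zpow_koszul_cons_zero_const k hD (Nat.le_succ _), Fin.cons_last,
    (hD.add_one.mul_right _).neg_one_zpow, one_smul]
  rw [Fin.sum_univ_succ, Fin.sum_univ_succ]
  simp only [Fin.cons_zero, Fin.cons_succ, one_mul, mul_one, hd1]
  rw [hpt_eq_zero_of_head_eq_zero _ (Function.update_self ..), zero_add, add_sub_cancel_left,
    ← Finset.sum_add_distrib]
  simp only [← hpt_update_succ_add, hMC, hpt_update_succ_zero, Finset.sum_const_zero]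

/-- For a dga `A` and `a ∈ A^{odd}` with `da + a·a = 0`, the element
`P(a) = Σ_{n≥0} 1 ⊗ a^{⊗n} ∈ C̄_•(A,A) = ∏_{n≥0} A ⊗ Ā^{⊗n}` is a Hochschild cycle,
`δ(P(a)) = 0`.  The Hochschild boundary `δ` of the product complex is described through its
two graded components: `δd` (internal differential part, preserving tensor length) and `δm`
(multiplication of adjacent factors together with the cyclic term, decreasing tensor length
by one); the statement `δ(P(a)) = 0` reads `δd (P(a)_m) + δm (P(a)_{m+1}) = 0` for all `m`. -/
theorem P_of_MC_element_is_hochschild_cycle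
    (k A : Type) [Field k] [Ring A] [Algebra k A]
    (𝒜 : ℤ → Submodule k A)
    (hone : (1 : A) ∈ 𝒜 0)
    (hmul : ∀ (i j : ℤ) (x y : A), x ∈ 𝒜 i → y ∈ 𝒜 j → x * y ∈ 𝒜 (i + j))
    (hinternal : DirectSum.IsInternal 𝒜)
    (d : A →ₗ[k] A) (hd1 : d 1 = 0) (hdd : ∀ x, d (d x) = 0)
    (hd_deg : ∀ (i : ℤ) (x : A), x ∈ 𝒜 i → d x ∈ 𝒜 (i + 1))
    (hLeib : ∀ (i : ℤ) (x y : A), x ∈ 𝒜 i → d (x * y) = d x * y + ((-1 : k) ^ i) • (x * d y))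
    (δd : ∀ m : ℕ, HChains k A m →ₗ[k] HChains k A m)
    (δm : ∀ m : ℕ, HChains k A (m + 1) →ₗ[k] HChains k A m)
    -- internal-differential part of the Hochschild boundary on pure tensors
    (hδd : ∀ (m : ℕ) (deg : Fin (m + 1) → ℤ) (a : Fin (m + 1) → A),
      (∀ i, a i ∈ 𝒜 (deg i)) →
      δd m (hpt k a) =
        ∑ i : Fin (m + 1),
          ((-1 : k) ^ (if (i : ℕ) = 0 then deg 0 else
              (∑ j : Fin (m + 1), if (j : ℕ) < (i : ℕ) then deg j else 0)
                + ((i : ℕ) : ℤ) - 1)) •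
            hpt k (Function.update a i (d (a i))))
    -- multiplication part (adjacent products and cyclic term) on pure tensors
    (hδm : ∀ (m : ℕ) (deg : Fin (m + 2) → ℤ) (a : Fin (m + 2) → A),
      (∀ i, a i ∈ 𝒜 (deg i)) →
      δm m (hpt k a) =
        (∑ i : Fin (m + 1),
          ((-1 : k) ^ (if (i : ℕ) = 0 then deg 0 else
              (∑ j : Fin (m + 2), if (j : ℕ) < (i : ℕ) then deg j else 0)
                + ((i : ℕ) : ℤ) - 1)) •
            hpt k (fun j : Fin (m + 1) =>
              if (j : ℕ) < (i : ℕ) then a (Fin.castSucc j)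
              else if (j : ℕ) = (i : ℕ) then a (Fin.castSucc j) * a j.succ
              else a j.succ))
        - ((-1 : k) ^ ((deg (Fin.last (m + 1)) + 1) *
              ((∑ j : Fin (m + 2), if (j : ℕ) < m + 1 then deg j else 0) + (m : ℤ)))) •
            hpt k (fun j : Fin (m + 1) =>
              if (j : ℕ) = 0 then a (Fin.last (m + 1)) * a 0
              else a (Fin.castSucc j)))
    (a : A) (D : ℤ) (ha : a ∈ 𝒜 D) (hD : Odd D)   -- a ∈ A^{odd}
    (hMC : d a + a * a = 0) :                       -- Maurer-Cartan equation
    ∀ m : ℕ,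
      δd m (hpt k (Fin.cons (1 : A) (fun _ : Fin m => a)))
        + δm m (hpt k (Fin.cons (1 : A) (fun _ : Fin (m + 1) => a))) = 0 :=
  P_of_MC_element_is_hochschild_cycle_general k A 𝒜 hone d hd1 δd δm hδd hδm a D ha hD hMC
end
end

section
/- Let A be a dga, a ∈ A^{odd} with da + a·a = 0, and Y ∈ A^{odd}. Then in C̄_•(A,A), the derivative of P along Y equals the Hochschild boundary interaction: (d/dt)|_{t=0} P(a + tY) = Σ_{n≥0} Σ_{i=1}^{n} ± 1 ⊗ a^{⊗(i-1)} ⊗ Y ⊗ a^{⊗(n-i)}, and applying Connes' B to the chain Σ_{n≥0} Y ⊗ a^{⊗n} yields this same element, i.e. (d/dt)|_{t=0} R(a+tY) = B(Σ_{n≥0} Y ⊗ a^{⊗n}). -/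
/-!
In tensor length `m + 1`, `P(a + tY)` is the multilinear map
`(x₁, …, x_{m+1}) ↦ 1 ⊗ x̄₁ ⊗ ⋯ ⊗ x̄_{m+1}` evaluated at the constant tuple `a + tY`; expanding,
the terms linear in `t` are those with `Y` in exactly one slot.

Connes' `B` sends `Y ⊗ a^{⊗m}` to the signed sum of its cyclic rotations prefixed by `1`, and the
rotation by `i` puts `Y` in slot `-i`. The exponent of each sign is a multiple of
`∑_{j ≥ i} (deg j + 1)`, which is even because all entries have odd degree, so every sign is `+1`.
-/

open scoped TensorProduct

noncomputable section

open Finset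

namespace Finset

variable {ι N : Type*} [Fintype ι] [DecidableEq ι] [AddCommMonoid N]

theorem sum_filter_card_le_one (g : Finset ι → N) :
    ∑ s with #s ≤ 1, g s = g ∅ + ∑ i, g {i} := by
  have hsets : ({s | #s ≤ 1} : Finset (Finset ι)) =
      insert ∅ (univ.map ⟨singleton, singleton_injective⟩) := by
    ext s
    simp [Nat.le_one_iff_eq_zero_or_eq_one, card_eq_one, eq_comm]
  rw [hsets, sum_insert (by simp), sum_map]
  rfl

end Finset

theorem Int.even_sum_add_card_of_odd {ι : Type*} (s : Finset ι) (f : ι → ℤ)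
    (hf : ∀ i ∈ s, Odd (f i)) : Even (∑ i ∈ s, f i + #s) := by
  rw [card_eq_sum_ones, Nat.cast_sum, Nat.cast_one, ← sum_add_distrib]
  exact even_sum _ fun i hi => (hf i hi).add_one

namespace MultilinearMap

variable {R ι M N : Type*} [CommSemiring R] [AddCommMonoid M] [Module R M]
  [AddCommMonoid N] [Module R N] [Fintype ι] [DecidableEq ι]
  (f : MultilinearMap R (fun _ : ι => M) N)

theorem map_const_add_smul_const (a y : M) (t : R) :
    f (fun _ => a + t • y) =
      ∑ s : Finset ι, t ^ #s • f (s.piecewise (fun _ => y) (fun _ => a)) := by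
  rw [show (fun _ : ι => a + t • y) = (fun _ => t • y) + fun _ => a from
    funext fun _ => add_comm _ _, map_add_univ]
  refine sum_congr rfl fun s _ => ?_
  rw [← prod_const, ← map_piecewise_smul]
  congr 1
  ext j
  by_cases hj : j ∈ s <;> simp [hj]

theorem exists_map_const_add_smul_const_eq (a y : M) :
    ∃ Q : R → N, ∀ t : R, f (fun _ => a + t • y) =
      f (fun _ => a) + t • ∑ i, f (fun j => if j = i then y else a) + t ^ 2 • Q t := by
  refine ⟨fun t => ∑ s with ¬#s ≤ 1, t ^ (#s - 2) • f (s.piecewise (fun _ => y) (fun _ => a)),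
    fun t => ?_⟩
  rw [map_const_add_smul_const, ← sum_filter_add_sum_filter_not univ fun s : Finset ι => #s ≤ 1,
    sum_filter_card_le_one, smul_sum, smul_sum]
  congr 1
  · congr 1
    · simp
    · refine sum_congr rfl fun i _ => ?_
      rw [card_singleton, pow_one, piecewise_singleton]
      congr 2
      ext j
      simp [Function.update_apply]
  · refine sum_congr rfl fun s hs => ?_
    rw [smul_smul, ← pow_add, Nat.add_sub_of_le (not_le.mp (mem_filter.mp hs).2)]

end MultilinearMap

theorem Fin.even_sum_ite_le_add_of_odd {m : ℕ} (deg : Fin (m + 1) → ℤ) (hdeg : ∀ j, Odd (deg j))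
    (i : Fin (m + 1)) :
    Even ((∑ j : Fin (m + 1), if (i : ℕ) ≤ (j : ℕ) then deg j else 0)
      + (m : ℤ) - ((i : ℕ) : ℤ) + 1) := by
  have hcard : (#(Ici i) : ℤ) = (m : ℤ) - ((i : ℕ) : ℤ) + 1 := by
    rw [Fin.card_Ici]
    omega
  simp only [Fin.val_fin_le]
  rw [add_sub_assoc, add_assoc, ← hcard, ← sum_filter, filter_le_eq_Ici]
  exact Int.even_sum_add_card_of_odd _ _ fun j _ => hdeg j

theorem Fin.cons_const_add_eq_ite {α : Type*} {m : ℕ} (y a : α) (i j : Fin (m + 1)) :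
    (Fin.cons y (fun _ : Fin m => a) : Fin (m + 1) → α) (i + j) = if j = -i then y else a := by
  simp only [eq_neg_iff_add_eq_zero, add_comm j i]
  cases (i + j) using Fin.cases <;> simp [Fin.succ_ne_zero]

section Hochschild

variable (k : Type) {A : Type} [Field k] [Ring A] [Algebra k A]

def hptOne (n : ℕ) : MultilinearMap k (fun _ : Fin n => A) (HChains k A n) :=
  (TensorProduct.mk k A _ 1).compMultilinearMap
    ((PiTensorProduct.tprod k).compLinearMap fun _ => (Submodule.span k {(1 : A)}).mkQ)

theorem hptOne_apply {n : ℕ} (g : Fin n → A) : hptOne k n g = hpt k (Fin.cons 1 g) := by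
  simp [hptOne, hpt]

theorem sum_hpt_rotate_cons_const (m : ℕ) (y a : A) :
    ∑ i : Fin (m + 1), hpt k (Fin.cons (1 : A) fun j : Fin (m + 1) =>
        (Fin.cons y (fun _ : Fin m => a) : Fin (m + 1) → A) (i + j)) =
      ∑ i : Fin (m + 1),
        hpt k (Fin.cons (1 : A) fun j : Fin (m + 1) => if j = i then y else a) := by
  simp only [Fin.cons_const_add_eq_ite]
  exact Fintype.sum_equiv (Equiv.neg _) _ _ fun i => rfl

end Hochschild

theorem derivative_of_R_is_B_of_Y_chain_general
    (k A : Type) [Field k] [Ring A] [Algebra k A]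
    (𝒜 : ℤ → Submodule k A)
    (Bup : ∀ m : ℕ, HChains k A m →ₗ[k] HChains k A (m + 1))
    -- Connes' operator on pure tensors
    (hB : ∀ (m : ℕ) (deg : Fin (m + 1) → ℤ) (a : Fin (m + 1) → A),
      (∀ i, a i ∈ 𝒜 (deg i)) →
      Bup m (hpt k a) =
        ∑ i : Fin (m + 1),
          ((-1 : k) ^
            (((∑ j : Fin (m + 1), if (i : ℕ) ≤ (j : ℕ) then deg j else 0)
                + (m : ℤ) - ((i : ℕ) : ℤ) + 1) *
             ((∑ j : Fin (m + 1), if (j : ℕ) < (i : ℕ) then deg j else 0)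
                + ((i : ℕ) : ℤ) - 1))) •
            hpt k (Fin.cons (1 : A) (fun j : Fin (m + 1) => a (i + j))))
    (a : A) (D : ℤ) (ha : a ∈ 𝒜 D) (hD : Odd D)       -- a ∈ A^{odd}
    (Y : A) (E : ℤ) (hY : Y ∈ 𝒜 E) (hE : Odd E) :      -- Y ∈ A^{odd}
    ∀ m : ℕ,
      -- (d/dt)|₀ of the tensor-length-(m+1) component of P(a + tY):
      (∃ Q : k → HChains k A (m + 1),
        ∀ t : k,
          hpt k (Fin.cons (1 : A) (fun _ : Fin (m + 1) => a + t • Y)) =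
            hpt k (Fin.cons (1 : A) (fun _ : Fin (m + 1) => a))
            + t • (∑ i : Fin (m + 1),
                hpt k (Fin.cons (1 : A)
                  (fun j : Fin (m + 1) => if j = i then Y else a)))
            + t ^ 2 • Q t)
      -- ... equals the corresponding component of B(Σ_{n≥0} Y ⊗ a^{⊗n}):
      ∧ Bup m (hpt k (Fin.cons Y (fun _ : Fin m => a))) =
          ∑ i : Fin (m + 1),
            hpt k (Fin.cons (1 : A) (fun j : Fin (m + 1) => if j = i then Y else a)) := by
  intro m
  refine ⟨by simpa only [hptOne_apply] using
    (hptOne k (m + 1)).exists_map_const_add_smul_const_eq a Y, ?_⟩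
  set deg : Fin (m + 1) → ℤ := Fin.cons E fun _ => D
  have hmem : ∀ i, (Fin.cons Y (fun _ : Fin m => a) : Fin (m + 1) → A) i ∈ 𝒜 (deg i) := by
    intro i
    cases i using Fin.cases <;> simpa [deg]
  have hodd : ∀ j, Odd (deg j) := by
    intro j
    cases j using Fin.cases <;> simpa [deg]
  rw [hB m deg _ hmem, ← sum_hpt_rotate_cons_const]
  refine sum_congr rfl fun i _ => ?_
  rw [((Fin.even_sum_ite_le_add_of_odd deg hodd i).mul_right _).neg_one_zpow, one_smul]

/-- For a dga `A`, a Maurer-Cartan element `a ∈ A^{odd}` and `Y ∈ A^{odd}`,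
the derivative `(d/dt)|₀ P(a + tY)` equals, in each tensor length, the sum
`Σᵢ 1 ⊗ a^{⊗(i-1)} ⊗ Y ⊗ a^{⊗(n-i)}`, and applying Connes' operator `B` to the chain
`Σ_{n≥0} Y ⊗ a^{⊗n}` yields this same element: `(d/dt)|₀ R(a + tY) = B(Σ_{n≥0} Y ⊗ a^{⊗n})`.
The derivative is taken componentwise (polynomial in `t` in each tensor degree): it is the
coefficient of `t` in the expansion of `P(a + tY)`. -/
theorem derivative_of_R_is_B_of_Y_chain
    (k A : Type) [Field k] [Ring A] [Algebra k A]
    (𝒜 : ℤ → Submodule k A)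
    (hone : (1 : A) ∈ 𝒜 0)
    (hmul : ∀ (i j : ℤ) (x y : A), x ∈ 𝒜 i → y ∈ 𝒜 j → x * y ∈ 𝒜 (i + j))
    (hinternal : DirectSum.IsInternal 𝒜)
    (d : A →ₗ[k] A) (hd1 : d 1 = 0) (hdd : ∀ x, d (d x) = 0)
    (hd_deg : ∀ (i : ℤ) (x : A), x ∈ 𝒜 i → d x ∈ 𝒜 (i + 1))
    (hLeib : ∀ (i : ℤ) (x y : A), x ∈ 𝒜 i → d (x * y) = d x * y + ((-1 : k) ^ i) • (x * d y))
    (Bup : ∀ m : ℕ, HChains k A m →ₗ[k] HChains k A (m + 1))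
    -- Connes' operator on pure tensors
    (hB : ∀ (m : ℕ) (deg : Fin (m + 1) → ℤ) (a : Fin (m + 1) → A),
      (∀ i, a i ∈ 𝒜 (deg i)) →
      Bup m (hpt k a) =
        ∑ i : Fin (m + 1),
          ((-1 : k) ^
            (((∑ j : Fin (m + 1), if (i : ℕ) ≤ (j : ℕ) then deg j else 0)
                + (m : ℤ) - ((i : ℕ) : ℤ) + 1) *
             ((∑ j : Fin (m + 1), if (j : ℕ) < (i : ℕ) then deg j else 0)
                + ((i : ℕ) : ℤ) - 1))) •
            hpt k (Fin.cons (1 : A) (fun j : Fin (m + 1) => a (i + j))))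
    (a : A) (D : ℤ) (ha : a ∈ 𝒜 D) (hD : Odd D)       -- a ∈ A^{odd}
    (hMC : d a + a * a = 0)                             -- Maurer-Cartan equation
    (Y : A) (E : ℤ) (hY : Y ∈ 𝒜 E) (hE : Odd E) :      -- Y ∈ A^{odd}
    ∀ m : ℕ,
      -- (d/dt)|₀ of the tensor-length-(m+1) component of P(a + tY):
      (∃ Q : k → HChains k A (m + 1),
        ∀ t : k,
          hpt k (Fin.cons (1 : A) (fun _ : Fin (m + 1) => a + t • Y)) =
            hpt k (Fin.cons (1 : A) (fun _ : Fin (m + 1) => a))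
            + t • (∑ i : Fin (m + 1),
                hpt k (Fin.cons (1 : A)
                  (fun j : Fin (m + 1) => if j = i then Y else a)))
            + t ^ 2 • Q t)
      -- ... equals the corresponding component of B(Σ_{n≥0} Y ⊗ a^{⊗n}):
      ∧ Bup m (hpt k (Fin.cons Y (fun _ : Fin m => a))) =
          ∑ i : Fin (m + 1),
            hpt k (Fin.cons (1 : A) (fun j : Fin (m + 1) => if j = i then Y else a)) :=
  derivative_of_R_is_B_of_Y_chain_general k A 𝒜 Bup hB a D ha hD Y E hY hE
end
end
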